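/- arXiv:2403.15676 — 4 statements merged into one kernel-verified Lean document; each statement's English description precedes it below -/
import Mathlib

section
/- Let F be a finite field with q elements and let I ⊆ F[X₁,…,Xₙ] be an ideal containing the field polynomials X_i^q − X_i for all i. Then the system f = 0 for all f ∈ I has no solution in Fⁿ if and only if 1 ∈ I. -/
theorem stmt_12 (F : Type*) [Field F] [Fintype F] (n : ℕ)
    (I : Ideal (MvPolynomial (Fin n) F))
    (hI : ∀ i : Fin n, (MvPolynomial.X i) ^ Fintype.card F - MvPolynomial.X i ∈ I) :
    (¬∃ x : Fin n → F, ∀ f ∈ I, MvPolynomial.eval x f = 0) ↔ (1 : MvPolynomial (Fin n) F) ∈ I := by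
  classical
  constructor
  · intro h
    by_contra h1
    have hne : I ≠ ⊤ := fun ht => h1 (ht ▸ Submodule.mem_top)
    obtain ⟨m, hm, hIm⟩ := Ideal.exists_le_maximal I hne
    haveI := hm
    set K := MvPolynomial (Fin n) F ⧸ m
    haveI : m.IsPrime := hm.isPrime
    haveI : IsDomain K := Ideal.Quotient.isDomain m
    set φ : MvPolynomial (Fin n) F →ₐ[F] K := Ideal.Quotient.mkₐ F m
    set y : Fin n → K := fun i => φ (MvPolynomial.X i)
    set q := Fintype.card F
    have hq : 1 < q := Fintype.one_lt_card
    -- each y i is a root of X^q - X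
    have hroot : ∀ i, (y i) ^ q - y i = 0 := by
      intro i
      have : φ ((MvPolynomial.X i) ^ q - MvPolynomial.X i) = 0 := by
        rw [Ideal.Quotient.mkₐ_eq_mk, Ideal.Quotient.eq_zero_iff_mem]
        exact hIm (hI i)
      simpa using this
    -- the image of F in K gives q distinct roots of X^q - X
    have hinj : Function.Injective (algebraMap F K) := (algebraMap F K).injective
    set P : Polynomial K := Polynomial.X ^ q - Polynomial.X
    have hPdeg : P.natDegree = q := by
      have h1 : (Polynomial.X : Polynomial K).degree < ((Polynomial.X : Polynomial K) ^ q).degree := by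
        rw [Polynomial.degree_X_pow, Polynomial.degree_X]
        exact mod_cast hq
      rw [Polynomial.natDegree_eq_of_degree_eq (Polynomial.degree_sub_eq_left_of_degree_lt h1),
        Polynomial.natDegree_X_pow]
    have hPne : P ≠ 0 := Polynomial.ne_zero_of_natDegree_gt (hPdeg ▸ hq)
    have himg : (Finset.univ.image (algebraMap F K)) ⊆ P.roots.toFinset := by
      intro z hz
      simp only [Finset.mem_image] at hz
      obtain ⟨a, -, rfl⟩ := hz
      rw [Multiset.mem_toFinset, Polynomial.mem_roots hPne]
      simp [P, Polynomial.IsRoot, ← map_pow, show a ^ q = a from FiniteField.pow_card a]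
    have hcard : (Finset.univ.image (algebraMap F K)).card = q :=
      Finset.card_image_of_injective _ hinj |>.trans (by simp [q])
    have hcard2 : P.roots.toFinset.card ≤ q := by
      calc P.roots.toFinset.card ≤ Multiset.card P.roots := P.roots.toFinset_card_le
        _ ≤ P.natDegree := P.card_roots'
        _ = q := hPdeg
    have heq : Finset.univ.image (algebraMap F K) = P.roots.toFinset :=
      Finset.eq_of_subset_of_card_le himg (hcard ▸ hcard2)
    -- so each y i comes from F
    have hy : ∀ i, ∃ a : F, algebraMap F K a = y i := by
      intro i
      have : y i ∈ P.roots.toFinset := by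
        rw [Multiset.mem_toFinset, Polynomial.mem_roots hPne]
        simp [P, Polynomial.IsRoot, hroot i]
      rw [← heq] at this
      simp only [Finset.mem_image] at this
      obtain ⟨a, -, ha⟩ := this
      exact ⟨a, ha⟩
    choose x hx using hy
    refine h ⟨x, fun f hf => ?_⟩
    apply hinj
    have h1 : algebraMap F K (MvPolynomial.eval x f) = MvPolynomial.aeval (fun i => algebraMap F K (x i)) f := by
      have := MvPolynomial.aeval_algebraMap_apply (B := K) x f
      rw [show MvPolynomial.aeval x f = MvPolynomial.eval x f by
        rw [← MvPolynomial.coe_aeval_eq_eval]; rfl] at this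
      simpa [Function.comp_def] using this.symm
    have h2 : MvPolynomial.aeval (fun i => algebraMap F K (x i)) f = φ f := by
      have : (MvPolynomial.aeval (fun i => algebraMap F K (x i)) : MvPolynomial (Fin n) F →ₐ[F] K) = φ := by
        apply MvPolynomial.algHom_ext
        intro i
        simp [hx i, y]
      rw [this]
    rw [h1, h2, map_zero]
    rw [Ideal.Quotient.mkₐ_eq_mk, Ideal.Quotient.eq_zero_iff_mem]
    exact hIm hf
  · rintro h1 ⟨x, hx⟩
    simpa using hx 1 h1
end

section
/- Let F be a field and n ≥ 1. Define a constraint system in unknowns o₀,…,o_{n−1} ∈ F with known input x ∈ F by: o_i·(o_i − 1) = 0 for each i, and Σ_i o_i·2^i = x. If x ∈ F is the image of a natural number m < 2ⁿ and the characteristic of F is 0 or greater than 2ⁿ, then the system has exactly one solution, given by the binary digits of m. -/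
lemma nat_sum_testBit : ∀ n m : ℕ, m < 2 ^ n →
    ∑ i ∈ Finset.range n, (m.testBit i).toNat * 2 ^ i = m := by
  intro n
  induction n with
  | zero => intro m hm; interval_cases m; simp
  | succ n ih =>
    intro m hm
    rw [Finset.sum_range_succ']
    have h2 : m / 2 < 2 ^ n := Nat.div_lt_of_lt_mul (by rw [pow_succ] at hm; omega)
    have ht : ∀ i, m.testBit (i + 1) = (m / 2).testBit i := fun i => by
      rw [Nat.testBit_succ]
    simp only [ht]
    have : ∑ i ∈ Finset.range n, ((m / 2).testBit i).toNat * 2 ^ (i + 1)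
        = (∑ i ∈ Finset.range n, ((m / 2).testBit i).toNat * 2 ^ i) * 2 := by
      rw [Finset.sum_mul]; exact Finset.sum_congr rfl fun i _ => by ring
    rw [this, ih (m / 2) h2]
    have h0 : (m.testBit 0).toNat = m % 2 := by
      rw [Nat.testBit_zero]; rcases Nat.mod_two_eq_zero_or_one m with h | h <;> simp [h]
    omega

lemma nat_testBit_sum : ∀ (n : ℕ) (b : ℕ → Bool), ∀ j < n,
    (∑ i ∈ Finset.range n, (b i).toNat * 2 ^ i).testBit j = b j := by
  intro n
  induction n with
  | zero => omega
  | succ n ih =>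
    intro b j hj
    rw [Finset.sum_range_succ']
    have hrw : ∑ i ∈ Finset.range n, (b (i + 1)).toNat * 2 ^ (i + 1)
        = 2 * ∑ i ∈ Finset.range n, (b (i + 1)).toNat * 2 ^ i := by
      rw [Finset.mul_sum]; exact Finset.sum_congr rfl fun i _ => by ring
    rw [hrw]
    cases j with
    | zero =>
      rw [Nat.testBit_zero]
      rcases Bool.eq_false_or_eq_true (b 0) with h | h <;> simp [h] <;> omega
    | succ j =>
      rw [Nat.testBit_succ]
      have : (2 * ∑ i ∈ Finset.range n, (b (i + 1)).toNat * 2 ^ i + (b 0).toNat * 2 ^ 0) / 2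
          = ∑ i ∈ Finset.range n, (b (i + 1)).toNat * 2 ^ i := by
        rcases Bool.eq_false_or_eq_true (b 0) with h | h <;> simp [h] <;> omega
      rw [this, ih (fun i => b (i + 1)) j (by omega)]

lemma nat_sum_lt (n : ℕ) (b : ℕ → Bool) :
    ∑ i ∈ Finset.range n, (b i).toNat * 2 ^ i < 2 ^ n := by
  induction n with
  | zero => simp
  | succ n ih =>
    rw [Finset.sum_range_succ, pow_succ]
    have h1 : (b n).toNat ≤ 1 := Bool.toNat_le (b n)
    have h2 : (b n).toNat * 2 ^ n ≤ 1 * 2 ^ n := Nat.mul_le_mul_right _ h1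
    omega

theorem stmt_13 (F : Type*) [Field F] (n : ℕ) (hn : 1 ≤ n) (m : ℕ) (hm : m < 2 ^ n)
    (hchar : ringChar F = 0 ∨ 2 ^ n < ringChar F) :
    ∀ o : Fin n → F,
      ((∀ i, o i * (o i - 1) = 0) ∧ ∑ i : Fin n, o i * 2 ^ (i : ℕ) = (m : F)) ↔
        o = fun (i : Fin n) => if m.testBit (i : ℕ) then (1 : F) else 0 := by
  intro o
  have cast_sum : ∀ b : ℕ → Bool,
      ((∑ i ∈ Finset.range n, (b i).toNat * 2 ^ i : ℕ) : F)
        = ∑ i : Fin n, ((b (i : ℕ)).toNat : F) * 2 ^ (i : ℕ) := by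
    intro b
    rw [Nat.cast_sum, ← Fin.sum_univ_eq_sum_range (fun i => (((b i).toNat * 2 ^ i : ℕ) : F))]
    exact Finset.sum_congr rfl fun i _ => by push_cast; ring
  constructor
  · rintro ⟨hbool, hsum⟩
    have hb : ∀ i, o i = 0 ∨ o i = 1 := by
      intro i
      rcases mul_eq_zero.1 (hbool i) with h | h
      · exact Or.inl h
      · exact Or.inr (by linear_combination h)
    classical
    set b : ℕ → Bool := fun i => if h : i < n then (if o ⟨i, h⟩ = 1 then true else false) else false
      with hbdef
    set k : ℕ := ∑ i ∈ Finset.range n, (b i).toNat * 2 ^ i with hk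
    have hbi : ∀ i : Fin n, ((b (i : ℕ)).toNat : F) = o i := by
      intro i
      simp only [hbdef, dif_pos i.isLt, Fin.eta]
      rcases hb i with h | h <;> simp [h]
    have hcast : (k : F) = (m : F) := by
      rw [hk, cast_sum b, ← hsum]
      exact Finset.sum_congr rfl fun i _ => by rw [hbi i]
    have hklt : k < 2 ^ n := nat_sum_lt n b
    have hkm : k = m := by
      rcases hchar with h0 | hp
      · have : CharZero F := (CharP.ringChar_zero_iff_CharZero F).mp h0
        exact Nat.cast_injective hcast
      · have := (CharP.natCast_eq_natCast F (ringChar F)).mp hcast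
        have h1 : k % ringChar F = m % ringChar F := this
        rw [Nat.mod_eq_of_lt (by omega), Nat.mod_eq_of_lt (by omega)] at h1
        exact h1
    funext i
    have htb : m.testBit (i : ℕ) = b (i : ℕ) := by
      rw [← hkm, hk]; exact nat_testBit_sum n b i i.isLt
    have := hbi i
    show o i = if m.testBit (i : ℕ) then (1 : F) else 0
    rw [htb]
    rcases Bool.eq_false_or_eq_true (b (i : ℕ)) with hB | hB
    · rw [hB] at this ⊢
      norm_num at this
      rw [← this]; simp
    · rw [hB] at this ⊢
      norm_num at this
      rw [← this]; simp
  · rintro rfl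
    refine ⟨fun i => ?_, ?_⟩
    · by_cases h : m.testBit (i : ℕ) <;> simp [h]
    · have hms := nat_sum_testBit n m hm
      have hc := cast_sum (fun i => m.testBit i)
      rw [hms] at hc
      rw [hc]
      exact Finset.sum_congr rfl fun i _ => by
        rcases Bool.eq_false_or_eq_true (m.testBit (i : ℕ)) with h | h <;> simp [h]
end

section
/- Let F be a field, and consider the constraint system (one-hot decoder) over F with known input k ∈ F: unknowns o₀,…,o_{w−1}, s, constraints o_i·(k − i) = 0 for i < w, s = Σ o_i, and s·(s − 1) = 0, where i denotes the image of the natural number i in F. If k is not equal to the image of any i < w and char F = 0 or char F > w, then the system has a unique solution: all o_i = 0 and s = 0. -/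
theorem stmt_15 (F : Type*) [Field F] (w : ℕ) (k : F)
    (hk : ∀ i : ℕ, i < w → k ≠ (i : F))
    (hchar : ringChar F = 0 ∨ w < ringChar F) :
    ∀ (o : Fin w → F) (s : F),
      ((∀ i : Fin w, o i * (k - ((i : ℕ) : F)) = 0) ∧ s = ∑ i : Fin w, o i ∧ s * (s - 1) = 0) ↔
        (o = fun _ => 0) ∧ s = 0 := by
  intro o s
  constructor
  · rintro ⟨h1, h2, _⟩
    have ho : o = fun _ => 0 := by
      funext i
      have := h1 i
      rcases mul_eq_zero.mp this with h | h
      · exact h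
      · exact absurd (sub_eq_zero.mp h) (hk i i.isLt)
    refine ⟨ho, ?_⟩
    simp [h2, ho]
  · rintro ⟨ho, hs⟩
    subst ho hs
    simp
end

section
/- Let F be a field and consider the Decoder(w) system as above with input k equal to the image of some j < w, where w ≥ 1 and char F = 0 or char F > w. Then the system is underconstrained: (o_j = 1, others 0, s = 1) and (all o_i = 0, s = 0) are two distinct solutions. -/
theorem stmt_16 (F : Type*) [Field F] (w : ℕ) (hw : 1 ≤ w) (j : Fin w) (k : F)
    (hk : k = ((j : ℕ) : F))
    (hchar : ringChar F = 0 ∨ w < ringChar F) :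
    ∃ s₁ s₂ : (Fin w → F) × F, s₁ ≠ s₂ ∧
      ((∀ i : Fin w, s₁.1 i * (k - ((i : ℕ) : F)) = 0) ∧ s₁.2 = ∑ i : Fin w, s₁.1 i ∧
        s₁.2 * (s₁.2 - 1) = 0) ∧
      ((∀ i : Fin w, s₂.1 i * (k - ((i : ℕ) : F)) = 0) ∧ s₂.2 = ∑ i : Fin w, s₂.1 i ∧
        s₂.2 * (s₂.2 - 1) = 0) ∧
      s₁ = (fun i => if i = j then 1 else 0, 1) ∧ s₂ = (fun _ => 0, 0) := by
  refine ⟨(fun i => if i = j then 1 else 0, 1), (fun _ => 0, 0), ?_, ⟨?_, ?_, by ring⟩,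
    ⟨fun i => by simp, by simp, by ring⟩, rfl, rfl⟩
  · intro h
    have := congrArg Prod.snd h
    simp at this
  · intro i
    by_cases hij : i = j
    · subst hij; simp [hk]
    · simp [hij]
  · simp
end
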